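/- Let m ≥ 1 and α ∈ ℂ. Let f : ℝ × ℤ → ℂ be differentiable in the time variable; define g(t,n) = ∏_{s=1}^{m−1} f(t,n+s) − α and G(t,n) = ∏_{s=0}^{m} f(t,n+s) − α, and assume G(t,n) ≠ 0 for all t, n. Suppose f satisfies ∂_t f(t,n) = f(t,n)·(∏_{s=1}^{m−1} g(t,n−s))/(∏_{s=0}^{m} G(t,n−s))·(g(t,n)·g(t,n−m)·(G(t,n) − G(t,n−m)) − G(t,n)·G(t,n−m)·(g(t,n) − g(t,n−m))) for all t, n. Then the function ũ(t,n) := g(t,n)·f(t,n+m)/G(t,n) satisfies ∂_t ũ(t,n) = ũ(t,n)²·(∏_{s=1}^{m} ũ(t,n+s) − ∏_{s=1}^{m} ũ(t,n−s)) − ũ(t,n)·(∏_{s=1}^{m−1} ũ(t,n+s) − ∏_{s=1}^{m−1} ũ(t,n−s)) for all t, n. -/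

import Mathlib

/-!
The modified lattice says `∂ log f_k = E_k`, so `∂ log ũ_n = ∂ log g_n + E_{n+m} - ∂ log G_n`
involves `∑ E_k` over the `m - 1` sites strictly between `n` and `n + m`. That sum telescopes,
`α E_k = Φ_{k+1} - Φ_k` for an explicit rational expression `Φ` in the windows around `k`. Its
two boundary values combine with the remaining terms into the conservation form
`∂ ũ_n = ũ_n (M_{n+m} - M_n)`, and the flux satisfies
`M_{n+m} = ũ_n ∏_{s=1}^{m} ũ_{n+s} - ∏_{s=1}^{m-1} ũ_{n+s}` and
`M_n = ũ_n ∏_{s=1}^{m} ũ_{n-s} - ∏_{s=1}^{m-1} ũ_{n-s}`, which is the lattice equation for `ũ`.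
-/

open Finset

theorem Finset.prod_Ico_mul_prod_Ico {ι M : Type*} [LinearOrder ι] [LocallyFiniteOrder ι]
    [CommMonoid M] (F : ι → M) {a b c : ι} (hab : a ≤ b) (hbc : b ≤ c) :
    (∏ i ∈ Ico a b, F i) * ∏ i ∈ Ico b c, F i = ∏ i ∈ Ico a c, F i := by
  rw [← prod_union (Ico_disjoint_Ico_consecutive a b c), Ico_union_Ico_eq_Ico hab hbc]

theorem Finset.mul_prod_Ico_add_one_eq_prod_Ico {ι M : Type*} [LinearOrder ι]
    [LocallyFiniteOrder ι] [Add ι] [One ι] [SuccAddOrder ι] [CommMonoid M] (F : ι → M)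
    {a b : ι} (hab : a < b) : F a * ∏ i ∈ Ico (a + 1) b, F i = ∏ i ∈ Ico a b, F i := by
  rw [Ico_add_one_left_eq_Ioo, mul_prod_Ioo_eq_prod_Ico hab]

theorem HasDerivAt.fun_finsetProd_of_eq_mul {ι 𝕜 𝔸 : Type*} [NontriviallyNormedField 𝕜]
    [NormedCommRing 𝔸] [NormedAlgebra 𝕜 𝔸] {u : Finset ι} {f : ι → 𝕜 → 𝔸} {e : ι → 𝔸}
    {x : 𝕜} (hf : ∀ i ∈ u, HasDerivAt (f i) (f i x * e i) x) :
    HasDerivAt (∏ i ∈ u, f i ·) ((∏ i ∈ u, f i x) * ∑ i ∈ u, e i) x := by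
  classical
  convert HasDerivAt.fun_finsetProd hf using 1
  rw [mul_sum]
  refine sum_congr rfl fun i hi => ?_
  rw [smul_eq_mul, ← mul_assoc, mul_comm _ (f i x), mul_prod_erase _ (f · x) hi]

namespace Int

theorem sum_Ico_sub {M : Type*} [AddCommGroup M] (F : ℤ → M) {a b : ℤ} (hab : a ≤ b) :
    ∑ i ∈ Ico a b, (F (i + 1) - F i) = F b - F a := by
  induction b, hab using Int.leInduction with
  | base => simp
  | succ b hab ih =>
    rw [← sum_Ico_add_eq_sum_Ico_add_one hab, ih]
    abel

variable {M : Type*} [CommMonoid M] (F : ℤ → M) {a b : ℤ} {N : ℕ}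

theorem prod_range_add_eq_prod_Ico (h : a + N = b) :
    ∏ s ∈ Finset.range N, F (a + s) = ∏ k ∈ Ico a b, F k := by
  subst h
  induction N with
  | zero => simp
  | succ N ih =>
    rw [prod_range_succ, ih, Nat.cast_succ, ← add_assoc,
      prod_Ico_mul_eq_prod_Ico_add_one (by omega)]

theorem prod_range_add_add_one_eq_prod_Ico (h : a + 1 + N = b) :
    ∏ s ∈ Finset.range N, F (a + s + 1) = ∏ k ∈ Ico (a + 1) b, F k := by
  rw [← prod_range_add_eq_prod_Ico F h]
  exact prod_congr rfl fun s _ => by rw [add_right_comm]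

theorem prod_range_sub_sub_one_eq_prod_Ico (h : a - N = b) :
    ∏ s ∈ Finset.range N, F (a - s - 1) = ∏ k ∈ Ico b a, F k := by
  subst h
  induction N with
  | zero => simp
  | succ N ih =>
    rw [prod_range_succ, ih, mul_comm,
      ← mul_prod_Ico_add_one_eq_prod_Ico F (show a - ((N + 1 : ℕ) : ℤ) < a by omega),
      show a - ((N + 1 : ℕ) : ℤ) + 1 = a - N by push_cast; ring,
      show a - ((N + 1 : ℕ) : ℤ) = a - N - 1 by push_cast; ring]

theorem prod_range_sub_eq_prod_Ico (h : a + 1 - N = b) :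
    ∏ s ∈ Finset.range N, F (a - s) = ∏ k ∈ Ico b (a + 1), F k := by
  rw [← prod_range_sub_sub_one_eq_prod_Ico F h]
  exact prod_congr rfl fun s _ => by ring_nf

end Int

noncomputable section

namespace SKLattice

section Algebra

variable {K : Type*} [Field K] (α : K) (m : ℤ) (f : ℤ → K)

def g (k : ℤ) : K := ∏ j ∈ Ico (k + 1) (k + m), f j - α

def G (k : ℤ) : K := ∏ j ∈ Ico k (k + m + 1), f j - α

local notation "𝐠" => g α m f
local notation "𝐆" => G α m f

def u (k : ℤ) : K := 𝐠 k * f (k + m) / 𝐆 k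

def E (k : ℤ) : K :=
  (∏ j ∈ Ico (k - m + 1) k, 𝐠 j) / (∏ j ∈ Ico (k - m) (k + 1), 𝐆 j) *
    (𝐠 k * 𝐠 (k - m) * (𝐆 k - 𝐆 (k - m)) - 𝐆 k * 𝐆 (k - m) * (𝐠 k - 𝐠 (k - m)))

def M (k : ℤ) : K :=
  (∏ j ∈ Ico (k - m + 1) k, 𝐠 j) *
      (𝐠 (k - m) * 𝐠 k * (𝐆 k + α) - 𝐆 (k - m) * 𝐆 k * (𝐠 k + α)) /
    ∏ j ∈ Ico (k - m) (k + 1), 𝐆 j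

def Φ (k : ℤ) : K :=
  -((∏ j ∈ Ico (k - m) k, 𝐠 j) * (∏ j ∈ Ico (k - m) (k + m), f j - α ^ 2) /
    ∏ j ∈ Ico (k - m) k, 𝐆 j)

variable {m}

theorem prod_Ico_eq_g_add (k : ℤ) : ∏ j ∈ Ico (k + 1) (k + m), f j = 𝐠 k + α :=
  (sub_add_cancel _ _).symm

theorem prod_Ico_eq_G_add (k : ℤ) : ∏ j ∈ Ico k (k + m + 1), f j = 𝐆 k + α :=
  (sub_add_cancel _ _).symm

theorem prod_Ico_u (a b : ℤ) :
    ∏ j ∈ Ico a b, u α m f j =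
      (∏ j ∈ Ico a b, 𝐠 j) * (∏ j ∈ Ico (a + m) (b + m), f j) / ∏ j ∈ Ico a b, 𝐆 j := by
  simp only [u, prod_div_distrib, prod_mul_distrib, prod_Ico_add']

theorem G_add_eq (hm : 1 ≤ m) (k : ℤ) : 𝐆 k + α = f k * (𝐠 k + α) * f (k + m) := by
  rw [G, g, sub_add_cancel, sub_add_cancel, ← mul_prod_Ico_add_one_eq_prod_Ico _ (by omega),
    ← prod_Ico_mul_eq_prod_Ico_add_one (by omega), mul_assoc]

theorem prod_Ico_sub_add_eq (hm : 1 ≤ m) (k : ℤ) :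
    ∏ j ∈ Ico (k - m) (k + m), f j = (𝐆 (k - m) + α) * (𝐠 k + α) := by
  rw [G, g, sub_add_cancel, sub_add_cancel, sub_add_cancel,
    prod_Ico_mul_prod_Ico _ (by omega) (by omega)]

theorem prod_Ico_sub_add_one_eq (hm : 1 ≤ m) (k : ℤ) :
    ∏ j ∈ Ico (k - m + 1) (k + m + 1), f j = (𝐠 (k - m) + α) * (𝐆 k + α) := by
  rw [g, G, sub_add_cancel, sub_add_cancel, sub_add_cancel,
    prod_Ico_mul_prod_Ico _ (by omega) (by omega)]

variable (hm : 1 ≤ m) (hG : ∀ k, G α m f k ≠ 0)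

include hG in
theorem prod_Ico_G_ne_zero (a b : ℤ) : ∏ j ∈ Ico a b, 𝐆 j ≠ 0 :=
  prod_ne_zero_iff.mpr fun j _ => hG j

include hm hG

theorem Φ_add_one_sub_Φ (k : ℤ) : Φ α m f (k + 1) - Φ α m f k = α * E α m f k := by
  have hg_top := (prod_Ico_mul_eq_prod_Ico_add_one (show k - m + 1 ≤ k by omega) 𝐠).symm
  have hg_bot := (mul_prod_Ico_add_one_eq_prod_Ico 𝐠 (show k - m < k by omega)).symm
  have hG_top := (prod_Ico_mul_eq_prod_Ico_add_one (show k - m + 1 ≤ k by omega) 𝐆).symm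
  have hG_bot := (mul_prod_Ico_add_one_eq_prod_Ico 𝐆 (show k - m < k by omega)).symm
  have hG_bot' := (mul_prod_Ico_add_one_eq_prod_Ico 𝐆 (show k - m < k + 1 by omega)).symm
  have := prod_Ico_G_ne_zero α f hG (k - m + 1) k
  have := hG k
  have := hG (k - m)
  rw [Φ, Φ, E, show k + 1 - m = k - m + 1 by ring, show k + 1 + m = k + m + 1 by ring, hg_top,
    hg_bot, hG_top, hG_bot', hG_bot, hG_top, prod_Ico_sub_add_one_eq α f hm,
    prod_Ico_sub_add_eq α f hm]
  field_simp
  ring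

theorem mul_sum_E_eq_Φ_sub_Φ (n : ℤ) :
    α * ∑ j ∈ Ico (n + 1) (n + m), E α m f j = Φ α m f (n + m) - Φ α m f (n + 1) := by
  rw [mul_sum, ← Int.sum_Ico_sub _ (by omega)]
  exact sum_congr rfl fun j _ => (Φ_add_one_sub_Φ α f hm hG j).symm

theorem g_sub_G_mul_Φ_add (n : ℤ) :
    (𝐠 n - 𝐆 n) * Φ α m f (n + m) =
      -(α * 𝐠 n * E α m f (n + m)) - 𝐠 n * 𝐆 n * M α m f (n + m) := by
  have hg_bot := (mul_prod_Ico_add_one_eq_prod_Ico 𝐠 (show n < n + m by omega)).symm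
  have hG_bot := (mul_prod_Ico_add_one_eq_prod_Ico 𝐆 (show n < n + m by omega)).symm
  have hG_bot' := (mul_prod_Ico_add_one_eq_prod_Ico 𝐆 (show n < n + m + 1 by omega)).symm
  have hG_top := (prod_Ico_mul_eq_prod_Ico_add_one (show n + 1 ≤ n + m by omega) 𝐆).symm
  have := prod_Ico_G_ne_zero α f hG (n + 1) (n + m)
  have := hG n
  have := hG (n + m)
  rw [Φ, E, M, prod_Ico_sub_add_eq α f hm]
  simp only [add_sub_cancel_right]
  rw [hg_bot, hG_bot, hG_bot', hG_top]
  field_simp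
  ring

theorem g_sub_G_mul_Φ_add_one (n : ℤ) :
    (𝐠 n - 𝐆 n) * Φ α m f (n + 1) =
      𝐠 n * (𝐆 n + α) * E α m f n - 𝐠 n * 𝐆 n * M α m f n := by
  have hg_top := (prod_Ico_mul_eq_prod_Ico_add_one (show n - m + 1 ≤ n by omega) 𝐠).symm
  have hG_top := (prod_Ico_mul_eq_prod_Ico_add_one (show n - m + 1 ≤ n by omega) 𝐆).symm
  have hG_bot := (mul_prod_Ico_add_one_eq_prod_Ico 𝐆 (show n - m < n + 1 by omega)).symm
  have := prod_Ico_G_ne_zero α f hG (n - m + 1) n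
  have := hG n
  have := hG (n - m)
  rw [Φ, E, M, show n + 1 - m = n - m + 1 by ring, show n + 1 + m = n + m + 1 by ring, hg_top,
    hG_bot, hG_top, prod_Ico_sub_add_one_eq α f hm]
  field_simp
  ring

theorem g_mul_G_mul_M_sub_M (n : ℤ) :
    𝐠 n * 𝐆 n * (M α m f (n + m) - M α m f n) =
      (𝐠 n + α) * 𝐆 n * ∑ j ∈ Ico (n + 1) (n + m), E α m f j + 𝐠 n * 𝐆 n * E α m f (n + m)
        - 𝐠 n * (𝐆 n + α) * ∑ j ∈ Ico n (n + m + 1), E α m f j := by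
  have hsum : ∑ j ∈ Ico n (n + m + 1), E α m f j =
      E α m f n + ∑ j ∈ Ico (n + 1) (n + m), E α m f j + E α m f (n + m) := by
    rw [← sum_Ico_add_eq_sum_Ico_add_one (by omega), Ico_add_one_left_eq_Ioo,
      add_sum_Ioo_eq_sum_Ico (by omega)]
  rw [hsum]
  linear_combination (𝐠 n - 𝐆 n) * mul_sum_E_eq_Φ_sub_Φ α f hm hG n + g_sub_G_mul_Φ_add α f hm hG n
    - g_sub_G_mul_Φ_add_one α f hm hG n

theorem M_eq (n : ℤ) :
    M α m f n =
      u α m f n * ∏ j ∈ Ico (n - m) n, u α m f j - ∏ j ∈ Ico (n - m + 1) n, u α m f j := by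
  have hg_bot := (mul_prod_Ico_add_one_eq_prod_Ico 𝐠 (show n - m < n by omega)).symm
  have hG_bot := (mul_prod_Ico_add_one_eq_prod_Ico 𝐆 (show n - m < n by omega)).symm
  have hG_bot' := (mul_prod_Ico_add_one_eq_prod_Ico 𝐆 (show n - m < n + 1 by omega)).symm
  have hG_top := (prod_Ico_mul_eq_prod_Ico_add_one (show n - m + 1 ≤ n by omega) 𝐆).symm
  have hf : ∏ j ∈ Ico n (n + m), f j = f n * (𝐠 n + α) := by
    rw [← prod_Ico_eq_g_add, mul_prod_Ico_add_one_eq_prod_Ico _ (by omega)]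
  have := prod_Ico_G_ne_zero α f hG (n - m + 1) n
  have := hG n
  have := hG (n - m)
  rw [prod_Ico_u, prod_Ico_u, sub_add_cancel, show n - m + 1 + m = n + 1 by ring,
    prod_Ico_eq_g_add α f n, M, u, G_add_eq α f hm, hg_bot, hG_bot, hG_bot', hG_top, hf]
  field_simp

theorem M_add_eq (n : ℤ) :
    M α m f (n + m) =
      u α m f n * ∏ j ∈ Ico (n + 1) (n + m + 1), u α m f j
        - ∏ j ∈ Ico (n + 1) (n + m), u α m f j := by
  have hg_top := (prod_Ico_mul_eq_prod_Ico_add_one (show n + 1 ≤ n + m by omega) 𝐠).symm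
  have hG_top := (prod_Ico_mul_eq_prod_Ico_add_one (show n + 1 ≤ n + m by omega) 𝐆).symm
  have hG_bot := (mul_prod_Ico_add_one_eq_prod_Ico 𝐆 (show n < n + m + 1 by omega)).symm
  have hf : ∏ j ∈ Ico (n + m + 1) (n + m + m + 1), f j = (𝐠 (n + m) + α) * f (n + m + m) := by
    rw [← prod_Ico_eq_g_add, prod_Ico_mul_eq_prod_Ico_add_one (by omega)]
  have := prod_Ico_G_ne_zero α f hG (n + 1) (n + m)
  have := hG n
  have := hG (n + m)
  rw [prod_Ico_u, prod_Ico_u, show n + 1 + m = n + m + 1 by ring,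
    show n + m + 1 + m = n + m + m + 1 by ring, hf, prod_Ico_eq_g_add α f (n + m), M, u,
    G_add_eq α f hm]
  simp only [add_sub_cancel_right]
  rw [hg_top, hG_top, hG_bot, hG_top]
  field_simp

theorem u_mul_M_add_sub_M (n : ℤ) :
    u α m f n * (M α m f (n + m) - M α m f n) =
      u α m f n ^ 2 *
          (∏ j ∈ Ico (n + 1) (n + m + 1), u α m f j - ∏ j ∈ Ico (n - m) n, u α m f j)
        - u α m f n *
          (∏ j ∈ Ico (n + 1) (n + m), u α m f j - ∏ j ∈ Ico (n - m + 1) n, u α m f j) := by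
  rw [M_add_eq α f hm hG, M_eq α f hm hG]
  ring

end Algebra

theorem hasDerivAt_u {𝕜 K : Type*} [NontriviallyNormedField 𝕜] [NontriviallyNormedField K]
    [NormedAlgebra 𝕜 K] {α : K} {m : ℤ} (hm : 1 ≤ m) {f : 𝕜 → ℤ → K} {t : 𝕜}
    (hG : ∀ k, G α m (f t) k ≠ 0) (hf : ∀ k, HasDerivAt (f · k) (f t k * E α m (f t) k) t)
    (n : ℤ) :
    HasDerivAt (fun τ => u α m (f τ) n)
      (u α m (f t) n * (M α m (f t) (n + m) - M α m (f t) n)) t := by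
  have hP := HasDerivAt.fun_finsetProd_of_eq_mul fun k (_ : k ∈ Ico (n + 1) (n + m)) => hf k
  have hQ := HasDerivAt.fun_finsetProd_of_eq_mul fun k (_ : k ∈ Ico n (n + m + 1)) => hf k
  convert ((hP.sub_const α).fun_mul (hf (n + m))).fun_div (hQ.sub_const α) (hG n) using 1
  · rfl
  rw [prod_Ico_eq_g_add α (f t) n, prod_Ico_eq_G_add α (f t) n, add_sub_cancel_right,
    add_sub_cancel_right, u]
  have := hG n
  field_simp
  linear_combination f t (n + m) * g_mul_G_mul_M_sub_M α (f t) hm hG n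

end SKLattice

end

/-- The Miura-type substitution `ũ = g f_m / G` maps solutions of the modified lattice
into solutions of the integrable discretization of the Sawada–Kotera equation. -/
theorem miura_modified_to_dSK_second
    (m : ℕ) (hm : 1 ≤ m) (α : ℂ)
    (f : ℝ → ℤ → ℂ)
    (g G : ℝ → ℤ → ℂ)
    (hg : ∀ (t : ℝ) (n : ℤ),
      g t n = (∏ s ∈ Finset.range (m - 1), f t (n + s + 1)) - α)
    (hG : ∀ (t : ℝ) (n : ℤ),
      G t n = (∏ s ∈ Finset.range (m + 1), f t (n + s)) - α)
    (hG0 : ∀ (t : ℝ) (n : ℤ), G t n ≠ 0)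
    (hf : ∀ (t : ℝ) (n : ℤ),
      HasDerivAt (fun τ => f τ n)
        (f t n * (∏ s ∈ Finset.range (m - 1), g t (n - s - 1))
            / (∏ s ∈ Finset.range (m + 1), G t (n - s))
          * (g t n * g t (n - m) * (G t n - G t (n - m))
            - G t n * G t (n - m) * (g t n - g t (n - m)))) t)
    (u' : ℝ → ℤ → ℂ)
    (hu' : ∀ (t : ℝ) (n : ℤ), u' t n = g t n * f t (n + m) / G t n) :
    ∀ (t : ℝ) (n : ℤ),
      HasDerivAt (fun τ => u' τ n)
        (u' t n ^ 2 *
            ((∏ s ∈ Finset.range m, u' t (n + s + 1)) -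
              ∏ s ∈ Finset.range m, u' t (n - s - 1))
          - u' t n *
            ((∏ s ∈ Finset.range (m - 1), u' t (n + s + 1)) -
              ∏ s ∈ Finset.range (m - 1), u' t (n - s - 1))) t := by
  intro t n
  have hm' : (1 : ℤ) ≤ m := by exact_mod_cast hm
  have hg' (τ : ℝ) : g τ = SKLattice.g α m (f τ) := funext fun k => by
    rw [hg, Int.prod_range_add_add_one_eq_prod_Ico _ (b := k + m), SKLattice.g]
    omega
  have hG' (τ : ℝ) : G τ = SKLattice.G α m (f τ) := funext fun k => by
    rw [hG, Int.prod_range_add_eq_prod_Ico _ (b := k + m + 1), SKLattice.G]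
    push_cast; ring
  have hu (τ : ℝ) : u' τ = SKLattice.u α m (f τ) := funext fun k => by
    rw [hu', hg', hG', SKLattice.u]
  have hGt : ∀ k, SKLattice.G α m (f t) k ≠ 0 := hG' t ▸ hG0 t
  have hE (k : ℤ) : HasDerivAt (f · k) (f t k * SKLattice.E α m (f t) k) t := by
    convert hf t k using 1
    rw [hg', hG', Int.prod_range_sub_sub_one_eq_prod_Ico _ (b := k - m + 1),
      Int.prod_range_sub_eq_prod_Ico _ (b := k - m), SKLattice.E]
    · ring
    all_goals omega
  have key := SKLattice.hasDerivAt_u hm' hGt hE n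
  rw [SKLattice.u_mul_M_add_sub_M α (f t) hm' hGt] at key
  simp only [hu]
  rw [Int.prod_range_add_add_one_eq_prod_Ico _ (N := m) (b := n + m + 1),
    Int.prod_range_sub_sub_one_eq_prod_Ico _ (N := m) (b := n - m),
    Int.prod_range_add_add_one_eq_prod_Ico _ (N := m - 1) (b := n + m),
    Int.prod_range_sub_sub_one_eq_prod_Ico _ (N := m - 1) (b := n - m + 1)]
  · exact key
  all_goals omega
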